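/- arXiv:2303.07882 — 4 statements merged into one kernel-verified Lean document; each statement's English description precedes it below -/
import Mathlib

section
/- Let G be a finite group, p a prime, and P₀ ≤ P₁ ≤ ⋯ ≤ Pₙ₊₁ a chain of p-subgroups of G with each Pᵢ normal in Pₙ₊₁ for i ≤ n+1. If Pₙ₊₁ is a Sylow p-subgroup of ⋂_{i=0}^{n+1} N_G(Pᵢ), then Pₙ₊₁ is a Sylow p-subgroup of ⋂_{i=0}^{n} N_G(Pᵢ). -/
/-!
Put `Q = Pₙ₊₁` and `H = ⋂_{i ≤ n} N_G(Pᵢ)`, so that `Q ≤ H` and the larger intersection is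
`H ∩ N_G(Q)`. Let `S` be a Sylow `p`-subgroup of `H` containing `Q`. If `Q < S`, then since
normalizers grow in the nilpotent group `S`, `S ∩ N_G(Q)` is a `p`-subgroup of `H ∩ N_G(Q)`
strictly larger than `Q`, contradicting that `Q` is Sylow there. Hence `Q = S`.
-/

/-- `Q` is a Sylow `p`-subgroup of the subgroup `H`: it is contained in `H` and its
order is the full `p`-part of the order of `H`. -/
def IsSylowIn (p : ℕ) {G : Type*} [Group G] (Q H : Subgroup G) : Prop :=
  Q ≤ H ∧ Nat.card Q = p ^ (Nat.card H).factorization p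

theorem iInf_fin_eq_iInf_castSucc_inf_last {α : Type*} [CompleteLattice α] {n : ℕ}
    (f : Fin (n + 1) → α) : ⨅ i, f i = (⨅ i : Fin n, f i.castSucc) ⊓ f (Fin.last n) :=
  le_antisymm (le_inf (le_iInf fun _ => iInf_le _ _) (iInf_le _ _))
    (le_iInf <| Fin.lastCases inf_le_right fun j => inf_le_left.trans (iInf_le _ j))

open Subgroup

section

variable {G : Type*} [Group G] [Finite G] {p : ℕ} [Fact p.Prime]

theorem IsPGroup.lt_inf_normalizer_of_lt {Q S : Subgroup G} (hS : IsPGroup p S) (hQS : Q < S) :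
    Q < S ⊓ normalizer (Q : Set G) := by
  have : Group.IsNilpotent S := hS.isNilpotent
  have hlt : Q.subgroupOf S < (normalizer (Q : Set G)).subgroupOf S := by
    rw [subgroupOf_normalizer_eq hQS.le]
    exact Group.normalizerCondition_of_isNilpotent _
      (lt_top_iff_ne_top.mpr fun h => hQS.not_ge (subgroupOf_eq_top.mp h))
  have := (map_lt_map_iff_of_injective S.subtype_injective).mpr hlt
  rwa [subgroupOf_map_subtype, subgroupOf_map_subtype, inf_eq_left.mpr hQS.le, inf_comm] at this

theorem IsSylowIn.card_le_of_isPGroup {Q H R : Subgroup G} (hQ : IsSylowIn p Q H)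
    (hR : IsPGroup p R) (hRH : R ≤ H) : Nat.card R ≤ Nat.card Q := by
  obtain ⟨k, hk⟩ := IsPGroup.iff_card.mp hR
  rw [hk, hQ.2]
  exact Nat.pow_le_pow_right (Fact.out : p.Prime).pos
    ((Nat.Prime.pow_dvd_iff_le_factorization Fact.out Nat.card_pos.ne').mp
      (hk ▸ card_dvd_of_le hRH))

theorem IsPGroup.exists_isSylowIn_ge {Q H : Subgroup G} (hQ : IsPGroup p Q) (hQH : Q ≤ H) :
    ∃ S, Q ≤ S ∧ IsPGroup p S ∧ IsSylowIn p S H := by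
  obtain ⟨S, hS⟩ := (hQ.of_equiv (subgroupOfEquivOfLe hQH).symm).exists_le_sylow
  refine ⟨S.map H.subtype, ?_, S.isPGroup'.map _, map_subtype_le _, ?_⟩
  · rw [← inf_eq_left.mpr hQH, ← subgroupOf_map_subtype]
    exact map_mono hS
  · rw [card_map_of_injective H.subtype_injective, S.card_eq_multiplicity]

theorem IsSylowIn.of_inf_normalizer {Q H : Subgroup G} (hQ : IsPGroup p Q) (hQH : Q ≤ H)
    (hSyl : IsSylowIn p Q (H ⊓ normalizer (Q : Set G))) : IsSylowIn p Q H := by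
  obtain ⟨S, hQS, hS, hSH⟩ := hQ.exists_isSylowIn_ge hQH
  obtain rfl | hlt := hQS.eq_or_lt
  · exact hSH
  have hR := hS.lt_inf_normalizer_of_lt hlt
  exact (hR.ne (eq_of_le_of_card_ge hR.le
    (hSyl.card_le_of_isPGroup (hS.to_le inf_le_left) (inf_le_inf_right _ hSH.1)))).elim

end

theorem sylow_of_sylow_in_smaller_intersection_general
    {G : Type*} [Group G] [Finite G] {p : ℕ} [Fact p.Prime]
    {n : ℕ} (P : Fin (n + 2) → Subgroup G)
    (hpgrp : ∀ i, IsPGroup p (P i))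
    (hnorm : ∀ i, P (Fin.last (n + 1)) ≤ Subgroup.normalizer (P i : Set G))
    (hSyl : IsSylowIn p (P (Fin.last (n + 1))) (⨅ i, Subgroup.normalizer (P i : Set G))) :
    IsSylowIn p (P (Fin.last (n + 1)))
      (⨅ i : Fin (n + 1), Subgroup.normalizer (P i.castSucc : Set G)) := by
  rw [iInf_fin_eq_iInf_castSucc_inf_last] at hSyl
  exact hSyl.of_inf_normalizer (hpgrp _) (le_iInf fun i => hnorm i.castSucc)

/-- If the top of a chain of p-subgroups (each normal in the top) is Sylow in the
intersection of all the normalizers, then it is Sylow in the intersection of the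
normalizers of the truncated chain. -/
theorem sylow_of_sylow_in_smaller_intersection
    {G : Type*} [Group G] [Finite G] {p : ℕ} [Fact p.Prime]
    {n : ℕ} (P : Fin (n + 2) → Subgroup G)
    (hmono : Monotone P)
    (hpgrp : ∀ i, IsPGroup p (P i))
    (hnorm : ∀ i, P (Fin.last (n + 1)) ≤ Subgroup.normalizer (P i : Set G))
    (hSyl : IsSylowIn p (P (Fin.last (n + 1))) (⨅ i, Subgroup.normalizer (P i : Set G))) :
    IsSylowIn p (P (Fin.last (n + 1)))
      (⨅ i : Fin (n + 1), Subgroup.normalizer (P i.castSucc : Set G)) :=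
  sylow_of_sylow_in_smaller_intersection_general P hpgrp hnorm hSyl
end

section
/- Let G be a finite group, p a prime, and P₀ < ⋯ < Pₙ a strictly increasing chain of nontrivial p-subgroups of G with each Pᵢ normal in Pₙ. If Pₙ is not a Sylow p-subgroup of N = ⋂ᵢ N_G(Pᵢ), then there exists a p-subgroup P of G with Pₙ < P, P a Sylow p-subgroup of N, and Pᵢ normal in P for all i. -/
theorem Sylow.isSylowIn_map_subtype {G : Type*} [Group G] {p : ℕ} [Fact p.Prime]
    {H : Subgroup G} [Finite H] (S : Sylow p H) :
    IsSylowIn p ((S : Subgroup H).map H.subtype) H := by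
  refine ⟨Subgroup.map_subtype_le _, ?_⟩
  rw [← S.card_eq_multiplicity]
  exact Nat.card_congr
    (Subgroup.equivMapOfInjective (S : Subgroup H) H.subtype H.subtype_injective).symm.toEquiv

theorem IsPGroup.exists_le_isSylowIn {G : Type*} [Group G] {p : ℕ} [Fact p.Prime]
    {P H : Subgroup G} [Finite H] (hP : IsPGroup p P) (hPH : P ≤ H) :
    ∃ Q : Subgroup G, IsPGroup p Q ∧ P ≤ Q ∧ IsSylowIn p Q H := by
  have hP' : IsPGroup p (P.subgroupOf H) :=
    hP.of_equiv (Subgroup.subgroupOfEquivOfLe hPH).symm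
  obtain ⟨S, hS⟩ := hP'.exists_le_sylow
  refine ⟨(S : Subgroup H).map H.subtype, S.isPGroup'.map H.subtype, ?_,
    S.isSylowIn_map_subtype⟩
  simpa only [Subgroup.subgroupOf_map_subtype, inf_eq_left.mpr hPH] using
    Subgroup.map_mono (f := H.subtype) hS

theorem exists_sylow_extension_general
    {G : Type*} [Group G] [Finite G] {p : ℕ} [Fact p.Prime]
    {n : ℕ} (P : Fin (n + 1) → Subgroup G)
    (hmono : StrictMono P)
    (hpgrp : ∀ i, IsPGroup p (P i))
    (hnorm : ∀ i, P (Fin.last n) ≤ Subgroup.normalizer (P i : Set G))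
    (hnotSyl : ¬ IsSylowIn p (P (Fin.last n)) (⨅ i, Subgroup.normalizer (P i : Set G))) :
    ∃ Q : Subgroup G, IsPGroup p Q ∧ P (Fin.last n) < Q ∧
      IsSylowIn p Q (⨅ i, Subgroup.normalizer (P i : Set G)) ∧
      ∀ i, P i ≤ Q ∧ Q ≤ Subgroup.normalizer (P i : Set G) := by
  have hlastN : P (Fin.last n) ≤ ⨅ i, Subgroup.normalizer (P i : Set G) := le_iInf hnorm
  obtain ⟨Q, hQ, hlastQ, hQSyl⟩ := (hpgrp (Fin.last n)).exists_le_isSylowIn hlastN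
  have hne : P (Fin.last n) ≠ Q := by
    rintro rfl
    exact hnotSyl hQSyl
  exact ⟨Q, hQ, lt_of_le_of_ne hlastQ hne, hQSyl, fun i =>
    ⟨(hmono.monotone (Fin.le_last i)).trans hlastQ, hQSyl.1.trans (iInf_le _ i)⟩⟩

/-- If the top of a Robinson chain is not Sylow in the intersection `N` of the
normalizers, then there is a Sylow p-subgroup `P` of `N` properly containing the
top, with every chain member normal in `P`. -/
theorem exists_sylow_extension
    {G : Type*} [Group G] [Finite G] {p : ℕ} [Fact p.Prime]
    (hp : p ∣ Nat.card G)
    {n : ℕ} (P : Fin (n + 1) → Subgroup G)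
    (hmono : StrictMono P)
    (hbot : ∀ i, P i ≠ ⊥)
    (hpgrp : ∀ i, IsPGroup p (P i))
    (hnorm : ∀ i, P (Fin.last n) ≤ Subgroup.normalizer (P i : Set G))
    (hnotSyl : ¬ IsSylowIn p (P (Fin.last n)) (⨅ i, Subgroup.normalizer (P i : Set G))) :
    ∃ Q : Subgroup G, IsPGroup p Q ∧ P (Fin.last n) < Q ∧
      IsSylowIn p Q (⨅ i, Subgroup.normalizer (P i : Set G)) ∧
      ∀ i, P i ≤ Q ∧ Q ≤ Subgroup.normalizer (P i : Set G) :=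
  exists_sylow_extension_general P hmono hpgrp hnorm hnotSyl
end

section
/- Let G be a finite group, p a prime, H ≤ G a subgroup, and Q, Q' two Sylow p-subgroups of H both containing a fixed p-subgroup Pₙ ≤ H. If Pₙ is normal in both Q and Q', then there exists g ∈ N_H(Pₙ) with gQg⁻¹ = Q'. -/
open Pointwise

/-- Two Sylow p-subgroups of `H` both containing a p-subgroup `Pₙ` normal in each of
them are conjugate by an element of the normalizer of `Pₙ` in `H`. -/
theorem sylow_conj_by_normalizer_element
    {G : Type*} [Group G] [Finite G] {p : ℕ} [Fact p.Prime]
    (H Pₙ Q Q' : Subgroup G)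
    (hPn : IsPGroup p Pₙ) (hPnH : Pₙ ≤ H)
    (hQ : IsSylowIn p Q H) (hQ' : IsSylowIn p Q' H)
    (hPQ : Pₙ ≤ Q) (hPQ' : Pₙ ≤ Q')
    (hnQ : Q ≤ Subgroup.normalizer (Pₙ : Set G)) (hnQ' : Q' ≤ Subgroup.normalizer (Pₙ : Set G)) :
    ∃ g : G, g ∈ H ∧ g ∈ Subgroup.normalizer (Pₙ : Set G) ∧ MulAut.conj g • Q = Q' := by
  set K : Subgroup G := Subgroup.normalizer (Pₙ : Set G) ⊓ H with hKdef
  have hQK : Q ≤ K := le_inf hnQ hQ.1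
  have hQ'K : Q' ≤ K := le_inf hnQ' hQ'.1
  have hp := (Fact.out : p.Prime)
  have hcardK : Nat.card K ≠ 0 := Nat.card_pos.ne'
  have hcardH : Nat.card H ≠ 0 := Nat.card_pos.ne'
  have hfact : (Nat.card K).factorization p = (Nat.card H).factorization p := by
    have h1 : (Nat.card K).factorization p ≤ (Nat.card H).factorization p := by
      have : Nat.card K ∣ Nat.card H := Subgroup.card_dvd_of_le inf_le_right
      exact (Nat.factorization_le_iff_dvd hcardK hcardH).2 this p
    have h2 : p ^ (Nat.card H).factorization p ∣ Nat.card K := by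
      rw [← hQ.2]
      calc Nat.card Q = Nat.card (Q.subgroupOf K) :=
            (Nat.card_congr (Subgroup.subgroupOfEquivOfLe hQK).symm.toEquiv)
        _ ∣ Nat.card K := Subgroup.card_subgroup_dvd_card _
    exact le_antisymm h1
      ((Nat.Prime.pow_dvd_iff_le_factorization hp hcardK).1 h2)
  have cardQK : Nat.card (Q.subgroupOf K) = p ^ (Nat.card K).factorization p := by
    rw [hfact, ← hQ.2]
    exact Nat.card_congr (Subgroup.subgroupOfEquivOfLe hQK).toEquiv
  have cardQ'K : Nat.card (Q'.subgroupOf K) = p ^ (Nat.card K).factorization p := by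
    rw [hfact, ← hQ'.2]
    exact Nat.card_congr (Subgroup.subgroupOfEquivOfLe hQ'K).toEquiv
  let S : Sylow p K := Sylow.ofCard (Q.subgroupOf K) cardQK
  let S' : Sylow p K := Sylow.ofCard (Q'.subgroupOf K) cardQ'K
  obtain ⟨g, hg⟩ := MulAction.exists_smul_eq K S S'
  refine ⟨(g : G), g.2.2, g.2.1, ?_⟩
  have hgsub : ∀ y : K, y ∈ (S : Subgroup K) ↔ g * y * g⁻¹ ∈ (S' : Subgroup K) := by
    intro y
    rw [← hg, Sylow.coe_subgroup_smul]
    constructor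
    · intro hy
      exact Subgroup.smul_mem_pointwise_smul y (MulAut.conj g) _ hy
    · intro hy
      have := Subgroup.smul_mem_pointwise_smul _ (MulAut.conj g)⁻¹ _ hy
      simpa [mul_assoc] using this
  have hS : ∀ y : K, y ∈ (S : Subgroup K) ↔ (y : G) ∈ Q := fun y => Iff.rfl
  have hS' : ∀ y : K, y ∈ (S' : Subgroup K) ↔ (y : G) ∈ Q' := fun y => Iff.rfl
  ext x
  simp only [Subgroup.mem_pointwise_smul_iff_inv_smul_mem, MulAut.smul_def,
    MulAut.conj_inv_apply]
  constructor
  · intro hx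
    have hxK : (g : G)⁻¹ * x * (g : G) ∈ K := hQK hx
    have : ((g⁻¹ : K) : G) * x * (g : G) ∈ K := by simpa using hxK
    set y : K := ⟨(g : G)⁻¹ * x * (g : G), hxK⟩ with hy
    have hyS : y ∈ (S : Subgroup K) := hx
    have := (hgsub y).1 hyS
    have h2 := (hS' _).1 this
    simpa [hy, mul_assoc] using h2
  · intro hx
    have hxK : x ∈ K := hQ'K hx
    set y : K := ⟨x, hxK⟩ with hy
    have hgy : (g⁻¹ * y * g : K) ∈ (S : Subgroup K) ↔ y ∈ (S' : Subgroup K) := by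
      rw [hgsub]
      constructor
      · intro h; simpa [mul_assoc] using h
      · intro h; simpa [mul_assoc] using h
    have : (g⁻¹ * y * g : K) ∈ (S : Subgroup K) := hgy.2 hx
    have h2 := (hS _).1 this
    simpa [mul_assoc] using h2
end

section
/- In the Morse matching digraph D above, D contains an infinite directed path if and only if D contains an infinite alternating directed path (one alternating between redundant and collapsible cells). -/
/-- A Morse matching digraph has an infinite directed path iff it has an infinite
directed alternating path (alternating between redundant and collapsible cells). -/
theorem infinite_path_iff_infinite_alternating_path
    {V : Type*} (E : V → V → Prop) (Red : V → Prop) (dim : V → ℕ)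
    (hup : ∀ u v, E u v → Red u → dim v = dim u + 1)
    (hdown : ∀ u v, E u v → ¬ Red u → dim v + 1 = dim u)
    (hnoredred : ∀ u v, E u v → Red u → ¬ Red v) :
    (∃ f : ℕ → V, ∀ n, E (f n) (f (n + 1))) ↔
      (∃ f : ℕ → V, (∀ n, E (f n) (f (n + 1))) ∧
        ∀ n, (Red (f n) ↔ Even n)) := by
  constructor
  · rintro ⟨f, hf⟩
    have hne : (Set.range fun k => dim (f k)).Nonempty := ⟨dim (f 0), 0, rfl⟩
    set d := sInf (Set.range fun k => dim (f k)) with hd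
    obtain ⟨n, hn'⟩ := Nat.sInf_mem hne
    have hn : dim (f n) = d := hn'
    have hmin : ∀ k, d ≤ dim (f k) := fun k => Nat.sInf_le ⟨k, rfl⟩
    have key : ∀ k, Red (f (n + 2 * k)) ∧ dim (f (n + 2 * k)) = d := by
      intro k
      induction k with
      | zero =>
        simp only [Nat.mul_zero, Nat.add_zero]
        refine ⟨?_, hn⟩
        by_contra hr
        have h1 := hdown _ _ (hf n) hr
        have h2 := hmin (n + 1)
        omega
      | succ k ih =>
        obtain ⟨hr, hdk⟩ := ih
        have h1 : ¬ Red (f (n + 2 * k + 1)) := hnoredred _ _ (hf _) hr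
        have hd1 : dim (f (n + 2 * k + 1)) = d + 1 := by
          have := hup _ _ (hf (n + 2 * k)) hr; omega
        have hd2' : dim (f (n + 2 * k + 1 + 1)) = d := by
          have := hdown _ _ (hf (n + 2 * k + 1)) h1; omega
        have hd2 : dim (f (n + 2 * k + 2)) = d := hd2'
        have hr2 : Red (f (n + 2 * k + 2)) := by
          by_contra hr2
          have h3 := hdown _ _ (hf (n + 2 * k + 2)) hr2
          have h4 := hmin (n + 2 * k + 2 + 1)
          omega
        have he : n + 2 * (k + 1) = n + 2 * k + 2 := by ring
        rw [he]
        exact ⟨hr2, hd2⟩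
    refine ⟨fun m => f (n + m), fun m => by
      simpa [Nat.add_assoc] using hf (n + m), ?_⟩
    intro m
    rcases Nat.even_or_odd m with ⟨k, hk⟩ | ⟨k, hk⟩
    · subst hk
      have := (key k).1
      rw [show k + k = 2 * k by ring]
      exact ⟨fun _ => ⟨k, by ring⟩, fun _ => this⟩
    · subst hk
      have hr := (key k).1
      have h1 : ¬ Red (f (n + 2 * k + 1)) := hnoredred _ _ (hf _) hr
      simp only []
      rw [show n + (2 * k + 1) = n + 2 * k + 1 by ring]
      constructor
      · exact fun h => absurd h h1
      · intro he
        exact absurd he (by simp [Nat.even_add_one, parity_simps])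
  · rintro ⟨f, hf, _⟩
    exact ⟨f, hf⟩
end
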